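/- arXiv:1112.5009 — 2 statements merged into one kernel-verified Lean document; each statement's English description precedes it below -/
import Mathlib

section
/- Let M be a connected topological manifold, let T be a locally compact Polish space, let Λ be a Borel measure on T, and equip M × T with the product lamination whose leaves are the sets M × {s}. Let A ⊆ M × T be a Borel transversal, i.e. every point of A has an open neighborhood V in M × T such that the projection to T maps A ∩ V homeomorphically onto an open subset of T. If card(A ∩ (M × {s})) ≤ Cat(M) for every s ∈ T, where Cat(M) is the Lusternik–Schnirelmann category of M, then Λ̃(A) ≤ Cat(M×T, Λ). -/
open MeasureTheory Set ENNReal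

/-- `Λ̃(A) = ∫⁻ s, #(A ∩ (M × {s})) dΛ(s)`: the lower integral of the extended-natural-number
cardinality of the slices of `A ⊆ M × T`, valued in `[0,∞]`. -/
noncomputable def lamMeasure (M : Type*) {T : Type*} [MeasurableSpace T]
    (Λ : Measure T) (A : Set (M × T)) : ℝ≥0∞ :=
  ∫⁻ s, ({m : M | (m, s) ∈ A}.encard : ℝ≥0∞) ∂Λ

/-- A tangential contraction of an open set `U ⊆ M × T` (for the product lamination with
leaves `M × {s}`): a continuous map `H : U × [0,1] → M × T` preserving the `T`-coordinate,
starting at the inclusion, and whose time-one map is constant on each connected component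
of each slice `U ∩ (M × {s})`. -/
structure IsTangentialContraction {M T : Type*} [TopologicalSpace M] [TopologicalSpace T]
    (U : Set (M × T)) (H : (M × T) × ℝ → M × T) : Prop where
  continuousOn : ContinuousOn H (U ×ˢ Icc (0 : ℝ) 1)
  leafwise : ∀ x ∈ U, ∀ t ∈ Icc (0 : ℝ) 1, (H (x, t)).2 = x.2
  init : ∀ x ∈ U, H (x, 0) = x
  final : ∀ x y : M × T, x ∈ U →
    y ∈ connectedComponentIn {z ∈ U | z.2 = x.2} x → H (x, 1) = H (y, 1)

/-- `τ_Λ(U)`: the infimum of `Λ̃(H(U × {1}))` over all tangential contractions `H` of `U`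
(equal to `∞` when `U` is not tangentially categorical). -/
noncomputable def tauLam {M T : Type*} [TopologicalSpace M] [TopologicalSpace T]
    [MeasurableSpace T] (Λ : Measure T) (U : Set (M × T)) : ℝ≥0∞ :=
  ⨅ H : { H : (M × T) × ℝ → M × T // IsTangentialContraction U H },
    lamMeasure M Λ ((fun x => H.1 (x, 1)) '' U)

/-- The measured category `Cat(M×T, Λ)` of the product lamination: the infimum, over
countable coverings of `M × T` by tangentially categorical open sets, of `Σ τ_Λ(U_i)`. -/
noncomputable def lamCat (M T : Type*) [TopologicalSpace M] [TopologicalSpace T]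
    [MeasurableSpace T] (Λ : Measure T) : ℝ≥0∞ :=
  sInf { m : ℝ≥0∞ | ∃ U : ℕ → Set (M × T),
    (∀ i, IsOpen (U i)) ∧ (⋃ i, U i) = Set.univ ∧
    (∀ i, ∃ H, IsTangentialContraction (U i) H) ∧
    m = ∑' i, tauLam Λ (U i) }

/-- The Lusternik–Schnirelmann category of `M`, valued in `[0,∞]`: the least number `k` of
open sets covering `M` whose inclusions are null-homotopic, and `∞` if there is no such
finite cover. -/
noncomputable def LScat (M : Type*) [TopologicalSpace M] : ℝ≥0∞ :=
  sInf { m : ℝ≥0∞ | ∃ k : ℕ, m = k ∧ ∃ U : Fin k → Set M,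
    (∀ i, IsOpen (U i)) ∧ (⋃ i, U i) = Set.univ ∧
    ∀ i, ∃ c : M, ContinuousMap.Homotopic
      ⟨fun x : U i => (x : M), continuous_subtype_val⟩ (ContinuousMap.const (U i) c) }

/-- A Borel transversal of the product lamination on `M × T`: a measurable set `A` each of
whose points has an open neighbourhood `V` such that the projection to `T` maps `A ∩ V`
homeomorphically onto an open subset of `T`. -/
def IsBorelTransversal {M T : Type*} [TopologicalSpace M] [TopologicalSpace T]
    [MeasurableSpace M] [MeasurableSpace T] (A : Set (M × T)) : Prop :=
  MeasurableSet A ∧ ∀ x ∈ A, ∃ V : Set (M × T), IsOpen V ∧ x ∈ V ∧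
    ∃ W : Set T, IsOpen W ∧ Prod.snd '' (A ∩ V) = W ∧ Set.InjOn Prod.snd (A ∩ V) ∧
      ∃ f : T → M × T, ContinuousOn f W ∧ ∀ s ∈ W, f s ∈ A ∩ V ∧ (f s).2 = s

open Topology

/-!
A countable cover of `M × T` by tangentially categorical open sets `Uᵢ` restricts, on each leaf
`M × {s}`, to a cover of `M` by the slices of those `Uᵢ` that meet the leaf; each slice is
contractible in `M` (run the tangential contraction, whose time-one map is locally constant on
the slice, then move each of its values to a base point along a path). Hence
`#(A ∩ M × {s}) ≤ Cat(M) ≤ #{i | s ∈ pr_T Uᵢ}`. The time-one image of `Uᵢ` meets every leaf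
that `Uᵢ` meets, so `τ_Λ(Uᵢ) ≥ Λ(pr_T Uᵢ)`, and integrating the pointwise bound over `T` gives
`Λ̃(A) ≤ Σ τ_Λ(Uᵢ)`.
-/

def IsContractibleIn {M : Type*} [TopologicalSpace M] (V : Set M) : Prop :=
  ∃ c : M, ContinuousMap.Homotopic
    ⟨fun x : V => (x : M), continuous_subtype_val⟩ (ContinuousMap.const V c)

theorem IsLocallyConstant.homotopic_const {X Y : Type*} [TopologicalSpace X] [TopologicalSpace Y]
    [PathConnectedSpace Y] {f : C(X, Y)} (hf : IsLocallyConstant f) (c : Y) :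
    f.Homotopic (ContinuousMap.const X c) := by
  let γ : ∀ y : Y, Path y c := fun y => PathConnectedSpace.somePath y c
  have hcont : Continuous fun p : unitInterval × X => γ (f p.2) p.1 := by
    refine continuous_iff_continuousAt.2 fun p => ?_
    refine (((γ (f p.2)).continuous.comp continuous_fst).continuousAt).congr_of_eventuallyEq ?_
    filter_upwards [(continuous_snd.tendsto p).eventually (hf.eventually_eq p.2)] with q hq
    change γ (f q.2) q.1 = γ (f p.2) q.1
    rw [hq]
  exact ⟨⟨⟨_, hcont⟩, fun x => (γ (f x)).source, fun x => (γ (f x)).target⟩⟩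

section Leaves

variable {M T : Type*} [TopologicalSpace M] [TopologicalSpace T]

theorem IsTangentialContraction.final_eq_of_mem_connectedComponentIn {U : Set (M × T)}
    {H : (M × T) × ℝ → M × T} (hH : IsTangentialContraction U H) {s : T} {x y : M}
    (hx : (x, s) ∈ U) (hy : y ∈ connectedComponentIn {m | (m, s) ∈ U} x) :
    H ((y, s), 1) = H ((x, s), 1) := by
  have hsub : (fun m => (m, s)) '' connectedComponentIn {m | (m, s) ∈ U} x ⊆
      connectedComponentIn {z ∈ U | z.2 = s} (x, s) := by
    refine (isPreconnected_connectedComponentIn.image _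
      (continuous_id.prodMk continuous_const).continuousOn).subset_connectedComponentIn
      ⟨x, mem_connectedComponentIn hx, rfl⟩ ?_
    rintro _ ⟨m, hm, rfl⟩
    exact ⟨connectedComponentIn_subset _ x hm, rfl⟩
  exact (hH.final (x, s) (y, s) hx (hsub ⟨y, hy, rfl⟩)).symm

theorem IsTangentialContraction.isContractibleIn_slice [LocallyConnectedSpace M]
    [PathConnectedSpace M] {U : Set (M × T)} (hU : IsOpen U) {H : (M × T) × ℝ → M × T}
    (hH : IsTangentialContraction U H) (s : T) : IsContractibleIn {m : M | (m, s) ∈ U} := by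
  set V : Set M := {m | (m, s) ∈ U}
  have hV : IsOpen V := hU.preimage (continuous_id.prodMk continuous_const)
  let track : C(unitInterval × V, M) :=
    ⟨fun p => (H ((p.2, s), p.1)).1, continuous_fst.comp <| hH.continuousOn.comp_continuous
      (((continuous_subtype_val.comp continuous_snd).prodMk continuous_const).prodMk
        (continuous_subtype_val.comp continuous_fst)) fun p => ⟨p.2.2, p.1.2⟩⟩
  have hincl : ContinuousMap.Homotopic ⟨fun x : V => (x : M), continuous_subtype_val⟩
      (track.curry 1) :=
    ⟨⟨track, fun x => congrArg Prod.fst (hH.init (x.1, s) x.2), fun _ => rfl⟩⟩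
  have hlc : IsLocallyConstant (track.curry 1) := by
    refine (IsLocallyConstant.iff_eventually_eq _).2 fun x => ?_
    have hnhds : {y : V | y.1 ∈ connectedComponentIn V x} ∈ 𝓝 x :=
      (hV.connectedComponentIn.preimage continuous_subtype_val).mem_nhds
        (mem_connectedComponentIn x.2)
    filter_upwards [hnhds] with y hy
    exact congrArg Prod.fst (hH.final_eq_of_mem_connectedComponentIn x.2 hy)
  obtain ⟨c⟩ : Nonempty M := PathConnectedSpace.nonempty
  exact ⟨c, hincl.trans (hlc.homotopic_const c)⟩

theorem LScat_le_enatCard {ι : Type*} (U : ι → Set M) (hopen : ∀ i, IsOpen (U i))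
    (hcover : ⋃ i, U i = univ) (hcontr : ∀ i, IsContractibleIn (U i)) :
    LScat M ≤ ENat.card ι := by
  cases finite_or_infinite ι with
  | inr _ => simp
  | inl _ =>
    have := Fintype.ofFinite ι
    let e := Fintype.equivFin ι
    rw [ENat.card_eq_coe_natCard, Nat.card_eq_fintype_card]
    refine sInf_le ⟨_, rfl, U ∘ e.symm, fun j => hopen _, ?_, fun j => hcontr _⟩
    change ⋃ j, U (e.symm j) = univ
    rwa [e.symm.surjective.iUnion_comp U]

theorem LScat_le_encard_leaf [LocallyConnectedSpace M] [PathConnectedSpace M] {ι : Type*}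
    {U : ι → Set (M × T)} (hopen : ∀ i, IsOpen (U i)) (hcover : ⋃ i, U i = univ)
    (hcat : ∀ i, ∃ H, IsTangentialContraction (U i) H) (s : T) :
    LScat M ≤ {i | s ∈ Prod.snd '' U i}.encard := by
  refine LScat_le_enatCard (fun i : {i | s ∈ Prod.snd '' U i} => {m : M | (m, s) ∈ U i})
    (fun i => (hopen i).preimage (continuous_id.prodMk continuous_const)) ?_
    (fun i => (hcat i).choose_spec.isContractibleIn_slice (hopen i) s)
  refine eq_univ_of_forall fun m => ?_
  obtain ⟨i, hi⟩ := mem_iUnion.1 (hcover ▸ mem_univ (m, s))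
  exact mem_iUnion.2 ⟨⟨i, (m, s), hi, rfl⟩, hi⟩

theorem lintegral_indicator_snd_image_le_tauLam [MeasurableSpace T] (Λ : Measure T)
    (U : Set (M × T)) : ∫⁻ s, (Prod.snd '' U).indicator 1 s ∂Λ ≤ tauLam Λ U := by
  refine le_iInf fun ⟨H, hH⟩ => lintegral_mono fun s => ?_
  by_cases hs : s ∈ Prod.snd '' U
  · obtain ⟨x, hx, rfl⟩ := hs
    have hleaf : H (x, 1) = ((H (x, 1)).1, x.2) :=
      Prod.ext rfl (hH.leafwise x hx 1 (right_mem_Icc.2 zero_le_one))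
    have hne : {m : M | (m, x.2) ∈ (fun y => H (y, 1)) '' U}.Nonempty :=
      ⟨(H (x, 1)).1, by rw [mem_ofPred_eq, ← hleaf]; exact mem_image_of_mem _ hx⟩
    rw [indicator_of_mem (mem_image_of_mem _ hx), Pi.one_apply, ← ENat.toENNReal_one,
      ENat.toENNReal_le]
    exact one_le_encard_iff_nonempty.2 hne
  · simp [hs]

end Leaves

theorem tsum_indicator_one_eq_encard {ι α : Type*} (S : ι → Set α) (a : α) :
    ∑' i, (S i).indicator (1 : α → ℝ≥0∞) a = {i | a ∈ S i}.encard := by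
  have hswap : ∀ i, (S i).indicator (1 : α → ℝ≥0∞) a = {i | a ∈ S i}.indicator 1 i := by
    intro i
    by_cases h : a ∈ S i <;> simp [h]
  rw [tsum_congr hswap, ← tsum_subtype]
  simp only [Pi.one_apply, tsum_set_one]

theorem stmt8_general {M T : Type*} [TopologicalSpace M] [ConnectedSpace M]
    (n : ℕ) [ChartedSpace (EuclideanSpace ℝ (Fin n)) M]
    [TopologicalSpace T]
    [MeasurableSpace T] [BorelSpace T] (Λ : Measure T)
    (A : Set (M × T))
    (hcard : ∀ s : T, ({m : M | (m, s) ∈ A}.encard : ℝ≥0∞) ≤ LScat M) :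
    lamMeasure M Λ A ≤ lamCat M T Λ := by
  have := ChartedSpace.locallyPathConnectedSpace (EuclideanSpace ℝ (Fin n)) M
  have : PathConnectedSpace M := pathConnectedSpace_iff_connectedSpace.2 ‹_›
  refine le_sInf ?_
  rintro _ ⟨U, hopen, hcover, hcat, rfl⟩
  calc lamMeasure M Λ A ≤ ∫⁻ s, ∑' i, (Prod.snd '' U i).indicator 1 s ∂Λ :=
        lintegral_mono fun s => (hcard s).trans <| by
          rw [tsum_indicator_one_eq_encard]
          exact_mod_cast LScat_le_encard_leaf hopen hcover hcat s
    _ = ∑' i, ∫⁻ s, (Prod.snd '' U i).indicator 1 s ∂Λ :=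
        lintegral_tsum fun i =>
          (measurable_one.indicator (isOpenMap_snd _ (hopen i)).measurableSet).aemeasurable
    _ ≤ ∑' i, tauLam Λ (U i) :=
        ENNReal.tsum_le_tsum fun i => lintegral_indicator_snd_image_le_tauLam Λ (U i)

/-- if `A` is a Borel transversal of the product lamination on `M × T` meeting
each leaf `M × {s}` in at most `Cat(M)` points, then `Λ̃(A) ≤ Cat(M×T, Λ)`. -/
theorem stmt8 {M T : Type*} [TopologicalSpace M] [T2Space M] [ConnectedSpace M]
    [MeasurableSpace M] [BorelSpace M]
    (n : ℕ) [ChartedSpace (EuclideanSpace ℝ (Fin n)) M]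
    [TopologicalSpace T] [PolishSpace T] [LocallyCompactSpace T]
    [MeasurableSpace T] [BorelSpace T] (Λ : Measure T)
    (A : Set (M × T)) (hA : IsBorelTransversal A)
    (hcard : ∀ s : T, ({m : M | (m, s) ∈ A}.encard : ℝ≥0∞) ≤ LScat M) :
    lamMeasure M Λ A ≤ lamCat M T Λ :=
  stmt8_general n Λ A hcard
end

section
/- Let M be a connected topological manifold, let T be a locally compact Polish space, let Λ be a Borel measure on T, and equip M × T with the product lamination whose leaves are the sets M × {s}. Let {T_k}_{k∈ℕ} be a countable family of open subsets of T with ⋃_k T_k = T. Then Cat(M×T, Λ) ≤ Σ_k Cat(M×T_k, Λ|_{T_k}); moreover, if the sets T_k are pairwise disjoint, then equality holds: Cat(M×T, Λ) = Σ_k Cat(M×T_k, Λ|_{T_k}). -/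
open MeasureTheory Set ENNReal

/-!
Every tangential contraction of an open set of `M × T_k` extends, by the identity off the slab
`M × T_k`, to a tangential contraction of its image in `M × T`, and the counting measure `Λ̃`
of a subset of the slab is the same whether computed with `Λ|_{T_k}` or with `Λ`. Lifting
near-optimal covers of all the slabs gives a countable cover of `M × T`, whence the inequality.
Conversely, a cover of `M × T` restricts to covers of the slabs, and when the `T_k` are
disjoint the integral defining `Λ̃` splits as the sum of the integrals over the `T_k`.
-/

open Topology

theorem ENNReal.le_tsum_sInf_of_forall {ι : Type*} [Countable ι] {S : ι → Set ℝ≥0∞}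
    {a : ℝ≥0∞} (h : ∀ m : ι → ℝ≥0∞, (∀ i, m i ∈ S i) → a ≤ ∑' i, m i) :
    a ≤ ∑' i, sInf (S i) := by
  refine ENNReal.le_of_forall_pos_le_add fun ε hε hfin => ?_
  obtain ⟨δ, hδ, hδε⟩ := ENNReal.exists_pos_sum_of_countable'
    (ENNReal.coe_ne_zero.mpr hε.ne') ι
  have happrox : ∀ i, ∃ m ∈ S i, m < sInf (S i) + δ i := fun i =>
    sInf_lt_iff.mp <| ENNReal.lt_add_right
      (ne_top_of_le_ne_top hfin.ne (ENNReal.le_tsum i)) (hδ i).ne'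
  choose m hmS hm using happrox
  calc a ≤ ∑' i, m i := h m hmS
    _ ≤ ∑' i, (sInf (S i) + δ i) := ENNReal.tsum_le_tsum fun i => (hm i).le
    _ = ∑' i, sInf (S i) + ∑' i, δ i := ENNReal.tsum_add
    _ ≤ ∑' i, sInf (S i) + ε := add_le_add_right hδε.le _

theorem Topology.IsEmbedding.image_connectedComponentIn {X Y : Type*} [TopologicalSpace X]
    [TopologicalSpace Y] {f : X → Y} (hf : IsEmbedding f) {s : Set X} {x : X} (hx : x ∈ s) :
    connectedComponentIn (f '' s) (f x) = f '' connectedComponentIn s x := by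
  refine Subset.antisymm ?_ (hf.continuous.continuousOn.image_connectedComponentIn_subset hx)
  set C := connectedComponentIn (f '' s) (f x)
  have hCs : C ⊆ f '' s := connectedComponentIn_subset _ _
  have hC : f '' (f ⁻¹' C) = C :=
    image_preimage_eq_of_subset (hCs.trans (image_subset_range _ _))
  have hpre : IsPreconnected (f ⁻¹' C) := by
    rw [← hf.isInducing.isPreconnected_image, hC]
    exact isPreconnected_connectedComponentIn
  have hpre_s : f ⁻¹' C ⊆ s := by
    rw [← hf.injective.preimage_image s]
    exact preimage_mono hCs
  calc C = f '' (f ⁻¹' C) := hC.symm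
    _ ⊆ f '' connectedComponentIn s x :=
      image_mono (hpre.subset_connectedComponentIn (mem_connectedComponentIn ⟨x, hx, rfl⟩)
        hpre_s)

section Slab

variable {M T : Type*} {s : Set T}

def slabIncl (s : Set T) : M × s → M × T := Prod.map id Subtype.val

theorem slabIncl_injective (s : Set T) : Function.Injective (slabIncl (M := M) s) :=
  Function.injective_id.prodMap Subtype.val_injective

theorem range_slabIncl (s : Set T) : range (slabIncl (M := M) s) = Prod.snd ⁻¹' s := by
  rw [slabIncl, range_prodMap, range_id, Subtype.range_coe, univ_prod]

noncomputable def slabLift (s : Set T) (H : (M × s) × ℝ → M × s) : (M × T) × ℝ → M × T :=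
  Function.extend (Prod.map (slabIncl s) id) (slabIncl s ∘ H) Prod.fst

theorem slabLift_slabIncl (H : (M × s) × ℝ → M × s) (p : M × s) (t : ℝ) :
    slabLift s H (slabIncl s p, t) = slabIncl s (H (p, t)) :=
  ((slabIncl_injective s).prodMap Function.injective_id).extend_apply _ _ (p, t)

def slabRestrict (s : Set T) (H : (M × T) × ℝ → M × T) : (M × s) × ℝ → M × s :=
  fun q => ((H (slabIncl s q.1, q.2)).1, q.1.2)

theorem image_slabLift_one (H : (M × s) × ℝ → M × s) (U : Set (M × s)) :
    (fun x => slabLift s H (x, 1)) '' (slabIncl s '' U) =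
      slabIncl s '' ((fun p => H (p, 1)) '' U) := by
  simp only [image_image, slabLift_slabIncl]

section Measure

variable [MeasurableSpace T] (Λ : Measure T)

theorem lamMeasure_inter_snd_preimage (hs : MeasurableSet s) (A : Set (M × T)) :
    lamMeasure M Λ (A ∩ Prod.snd ⁻¹' s) =
      ∫⁻ t in s, ({m : M | (m, t) ∈ A}.encard : ℝ≥0∞) ∂Λ := by
  rw [lamMeasure, ← lintegral_indicator hs]
  congr 1 with t
  by_cases ht : t ∈ s <;> simp [ht]

theorem lamMeasure_comap_subtype (hs : MeasurableSet s) (A : Set (M × s)) :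
    lamMeasure M (Λ.comap (Subtype.val : s → T)) A = lamMeasure M Λ (slabIncl s '' A) := by
  have hA : slabIncl s '' A = slabIncl s '' A ∩ Prod.snd ⁻¹' s :=
    (inter_eq_left.mpr ((image_subset_range _ _).trans (range_slabIncl s).subset)).symm
  have hslice : ∀ u : s, {m : M | (m, (u : T)) ∈ slabIncl s '' A} = {m : M | (m, u) ∈ A} :=
    fun u => Set.ext fun m => (slabIncl_injective s).mem_set_image (a := (m, u))
  rw [hA, lamMeasure_inter_snd_preimage Λ hs, ← lintegral_subtype_comap hs, lamMeasure]
  simp only [hslice]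

theorem tsum_lamMeasure_inter_snd_preimage {Tk : ℕ → Set T} (hm : ∀ k, MeasurableSet (Tk k))
    (hd : Pairwise (Function.onFun Disjoint Tk)) (hcov : ⋃ k, Tk k = univ) (A : Set (M × T)) :
    ∑' k, lamMeasure M Λ (A ∩ Prod.snd ⁻¹' Tk k) = lamMeasure M Λ A := by
  simp only [lamMeasure_inter_snd_preimage Λ (hm _)]
  rw [← lintegral_iUnion hm hd, hcov, Measure.restrict_univ, lamMeasure]

end Measure

variable [TopologicalSpace M] [TopologicalSpace T]

theorem isEmbedding_slabIncl (s : Set T) : IsEmbedding (slabIncl (M := M) s) :=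
  IsEmbedding.id.prodMap IsEmbedding.subtypeVal

theorem isOpenEmbedding_slabIncl (hs : IsOpen s) : IsOpenEmbedding (slabIncl (M := M) s) :=
  IsOpenEmbedding.id.prodMap hs.isOpenEmbedding_subtypeVal

theorem slabIncl_slabRestrict {U : Set (M × T)} {H : (M × T) × ℝ → M × T}
    (hH : IsTangentialContraction U H) {p : M × s} (hp : slabIncl s p ∈ U) {t : ℝ}
    (ht : t ∈ Icc (0 : ℝ) 1) :
    slabIncl s (slabRestrict s H (p, t)) = H (slabIncl s p, t) :=
  Prod.ext rfl (hH.leafwise _ hp t ht).symm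

theorem IsTangentialContraction.slabLift {U : Set (M × s)} {H : (M × s) × ℝ → M × s}
    (hH : IsTangentialContraction U H) :
    IsTangentialContraction (slabIncl s '' U) (slabLift s H) where
  continuousOn := by
    have hprod : (slabIncl s '' U) ×ˢ Icc (0 : ℝ) 1 =
        Prod.map (slabIncl s) id '' (U ×ˢ Icc (0 : ℝ) 1) := by
      rw [prodMap_image_prod, image_id]
    rw [hprod, ((isEmbedding_slabIncl s).isInducing.prodMap IsInducing.id).continuousOn_image_iff]
    exact ((isEmbedding_slabIncl s).continuous.comp_continuousOn hH.continuousOn).congr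
      fun q _ => slabLift_slabIncl H q.1 q.2
  leafwise := by
    rintro _ ⟨p, hp, rfl⟩ t ht
    rw [slabLift_slabIncl]
    exact congrArg Subtype.val (hH.leafwise p hp t ht)
  init := by
    rintro _ ⟨p, hp, rfl⟩
    rw [slabLift_slabIncl, hH.init p hp]
  final := by
    rintro _ y ⟨p, hp, rfl⟩ hy
    have hslice : {z ∈ slabIncl s '' U | z.2 = (slabIncl s p).2} =
        slabIncl s '' {w ∈ U | w.2 = p.2} := by
      ext z
      constructor
      · rintro ⟨⟨w, hw, rfl⟩, hw2⟩
        exact ⟨w, ⟨hw, Subtype.ext hw2⟩, rfl⟩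
      · rintro ⟨w, ⟨hw, hw2⟩, rfl⟩
        exact ⟨⟨w, hw, rfl⟩, congrArg Subtype.val hw2⟩
    rw [hslice, (isEmbedding_slabIncl s).image_connectedComponentIn
      (show p ∈ {w ∈ U | w.2 = p.2} from ⟨hp, rfl⟩)] at hy
    obtain ⟨q, hq, rfl⟩ := hy
    rw [slabLift_slabIncl, slabLift_slabIncl, hH.final p q hp hq]

theorem IsTangentialContraction.slabRestrict {U : Set (M × T)} {H : (M × T) × ℝ → M × T}
    (hH : IsTangentialContraction U H) :
    IsTangentialContraction (slabIncl s ⁻¹' U) (slabRestrict s H) where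
  continuousOn := by
    have hmaps : MapsTo (Prod.map (slabIncl s) id) ((slabIncl s ⁻¹' U) ×ˢ Icc (0 : ℝ) 1)
        (U ×ˢ Icc (0 : ℝ) 1) := fun _ hq => hq
    refine ContinuousOn.prodMk ?_ (continuous_snd.comp continuous_fst).continuousOn
    exact continuous_fst.comp_continuousOn <| hH.continuousOn.comp
      ((isEmbedding_slabIncl s).continuous.prodMap continuous_id).continuousOn hmaps
  leafwise _ _ _ _ := rfl
  init p hp := Prod.ext (congrArg Prod.fst (hH.init _ hp) : (H (slabIncl s p, 0)).1 = p.1) rfl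
  final p q hp hq := by
    have hq_slice : q.2 = p.2 := (connectedComponentIn_subset _ _ hq).2
    have hslice : slabIncl s '' {z ∈ slabIncl s ⁻¹' U | z.2 = p.2} ⊆
        {z ∈ U | z.2 = (slabIncl s p).2} := by
      rintro _ ⟨w, ⟨hw, hw2⟩, rfl⟩
      exact ⟨hw, congrArg Subtype.val hw2⟩
    have hcomp : slabIncl s q ∈ connectedComponentIn {z ∈ U | z.2 = (slabIncl s p).2}
        (slabIncl s p) :=
      connectedComponentIn_mono _ hslice <|
        (isEmbedding_slabIncl s).continuous.continuousOn.image_connectedComponentIn_subset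
          (show p ∈ {z ∈ slabIncl s ⁻¹' U | z.2 = p.2} from ⟨hp, rfl⟩) ⟨q, hq, rfl⟩
    exact Prod.ext (congrArg Prod.fst (hH.final _ _ hp hcomp) :
      (H (slabIncl s p, 1)).1 = (H (slabIncl s q, 1)).1) hq_slice.symm

theorem image_slabRestrict_one {U : Set (M × T)} {H : (M × T) × ℝ → M × T}
    (hH : IsTangentialContraction U H) :
    slabIncl s '' ((fun p => slabRestrict s H (p, 1)) '' (slabIncl s ⁻¹' U)) =
      (fun x => H (x, 1)) '' U ∩ Prod.snd ⁻¹' s := by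
  have hone : (1 : ℝ) ∈ Icc (0 : ℝ) 1 := right_mem_Icc.mpr zero_le_one
  have hU : U ∩ Prod.snd ⁻¹' s = U ∩ (fun x => H (x, 1)) ⁻¹' (Prod.snd ⁻¹' s) := by
    ext x
    simp +contextual only [mem_inter_iff, mem_preimage, and_congr_right_iff,
      hH.leafwise x _ 1 hone, implies_true]
  have himage : slabIncl s '' ((fun p => slabRestrict s H (p, 1)) '' (slabIncl s ⁻¹' U)) =
      (fun x => H (x, 1)) '' (slabIncl s '' (slabIncl s ⁻¹' U)) := by
    rw [image_image, image_image]
    exact image_congr fun p hp => slabIncl_slabRestrict hH hp hone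
  rw [himage, image_preimage_eq_inter_range, range_slabIncl, hU, image_inter_preimage]

variable [MeasurableSpace T] (Λ : Measure T)

theorem tauLam_image_slabIncl_le (hs : MeasurableSet s) (U : Set (M × s)) :
    tauLam Λ (slabIncl s '' U) ≤ tauLam (Λ.comap (Subtype.val : s → T)) U :=
  le_iInf fun H => by
    calc tauLam Λ (slabIncl s '' U)
        ≤ lamMeasure M Λ ((fun x => slabLift s H.1 (x, 1)) '' (slabIncl s '' U)) :=
          iInf_le_of_le ⟨_, H.2.slabLift⟩ le_rfl
      _ = lamMeasure M (Λ.comap Subtype.val) ((fun p => H.1 (p, 1)) '' U) := by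
          rw [image_slabLift_one, lamMeasure_comap_subtype Λ hs]

theorem tauLam_preimage_slabIncl_le (hs : MeasurableSet s) {U : Set (M × T)}
    {H : (M × T) × ℝ → M × T} (hH : IsTangentialContraction U H) :
    tauLam (Λ.comap (Subtype.val : s → T)) (slabIncl s ⁻¹' U) ≤
      lamMeasure M Λ ((fun x => H (x, 1)) '' U ∩ Prod.snd ⁻¹' s) := by
  calc tauLam (Λ.comap Subtype.val) (slabIncl s ⁻¹' U)
      ≤ lamMeasure M (Λ.comap Subtype.val)
          ((fun p => slabRestrict s H (p, 1)) '' (slabIncl s ⁻¹' U)) :=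
        iInf_le_of_le ⟨_, hH.slabRestrict⟩ le_rfl
    _ = lamMeasure M Λ ((fun x => H (x, 1)) '' U ∩ Prod.snd ⁻¹' s) := by
        rw [lamMeasure_comap_subtype Λ hs, image_slabRestrict_one hH]

theorem tsum_tauLam_preimage_slabIncl_le {Tk : ℕ → Set T} (hm : ∀ k, MeasurableSet (Tk k))
    (hd : Pairwise (Function.onFun Disjoint Tk)) (hcov : ⋃ k, Tk k = univ) (U : Set (M × T)) :
    ∑' k, tauLam (Λ.comap (Subtype.val : Tk k → T)) (slabIncl (Tk k) ⁻¹' U) ≤ tauLam Λ U :=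
  le_iInf fun H => by
    calc ∑' k, tauLam (Λ.comap Subtype.val) (slabIncl (Tk k) ⁻¹' U)
        ≤ ∑' k, lamMeasure M Λ ((fun x => H.1 (x, 1)) '' U ∩ Prod.snd ⁻¹' Tk k) :=
          ENNReal.tsum_le_tsum fun k => tauLam_preimage_slabIncl_le Λ (hm k) H.2
      _ = lamMeasure M Λ ((fun x => H.1 (x, 1)) '' U) :=
          tsum_lamMeasure_inter_snd_preimage Λ hm hd hcov _

theorem lamCat_le_tsum_tauLam {ι : Type*} [Denumerable ι] (U : ι → Set (M × T))
    (hUo : ∀ i, IsOpen (U i)) (hUcov : ⋃ i, U i = univ)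
    (hUcat : ∀ i, ∃ H, IsTangentialContraction (U i) H) :
    lamCat M T Λ ≤ ∑' i, tauLam Λ (U i) := by
  set e := Denumerable.eqv ι
  calc lamCat M T Λ ≤ ∑' n, tauLam Λ (U (e.symm n)) :=
        sInf_le ⟨U ∘ e.symm, fun n => hUo _, e.symm.surjective.iUnion_comp U ▸ hUcov,
          fun n => hUcat _, rfl⟩
    _ = ∑' i, tauLam Λ (U i) := e.symm.tsum_eq fun i => tauLam Λ (U i)

variable [OpensMeasurableSpace T] {Tk : ℕ → Set T}

theorem lamCat_le_tsum_lamCat_slab (hTk : ∀ k, IsOpen (Tk k)) (hcov : ⋃ k, Tk k = univ) :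
    lamCat M T Λ ≤ ∑' k, lamCat M (Tk k) (Λ.comap (Subtype.val : Tk k → T)) := by
  refine ENNReal.le_tsum_sInf_of_forall fun c hc => ?_
  choose U hUo hUcov hUcat hc using hc
  have hcover : ⋃ p : ℕ × ℕ, slabIncl (Tk p.1) '' U p.1 p.2 = univ := by
    refine eq_univ_of_forall fun x => ?_
    obtain ⟨k, hk⟩ := mem_iUnion.mp (hcov.symm ▸ mem_univ x.2 : x.2 ∈ ⋃ k, Tk k)
    obtain ⟨i, hi⟩ := mem_iUnion.mp (hUcov k ▸ mem_univ ((x.1, ⟨x.2, hk⟩) : M × Tk k))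
    exact mem_iUnion.mpr ⟨(k, i), mem_image_of_mem _ hi⟩
  calc lamCat M T Λ ≤ ∑' p : ℕ × ℕ, tauLam Λ (slabIncl (Tk p.1) '' U p.1 p.2) :=
        lamCat_le_tsum_tauLam Λ _
          (fun p => (isOpenEmbedding_slabIncl (hTk p.1)).isOpenMap _ (hUo p.1 p.2)) hcover
          fun p => (hUcat p.1 p.2).imp' _ fun _ hH => hH.slabLift
    _ ≤ ∑' p : ℕ × ℕ, tauLam (Λ.comap Subtype.val) (U p.1 p.2) :=
        ENNReal.tsum_le_tsum fun p => tauLam_image_slabIncl_le Λ (hTk p.1).measurableSet _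
    _ = ∑' k, c k := by
        rw [ENNReal.tsum_prod
          (f := fun k i => tauLam (Λ.comap (Subtype.val : Tk k → T)) (U k i))]
        exact tsum_congr fun k => (hc k).symm

theorem tsum_lamCat_slab_le_lamCat (hTk : ∀ k, IsOpen (Tk k)) (hcov : ⋃ k, Tk k = univ)
    (hd : Pairwise (Function.onFun Disjoint Tk)) :
    ∑' k, lamCat M (Tk k) (Λ.comap (Subtype.val : Tk k → T)) ≤ lamCat M T Λ := by
  refine le_sInf ?_
  rintro _ ⟨U, hUo, hUcov, hUcat, rfl⟩
  have hslab : ∀ k, lamCat M (Tk k) (Λ.comap Subtype.val) ≤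
      ∑' i, tauLam (Λ.comap Subtype.val) (slabIncl (Tk k) ⁻¹' U i) := fun k =>
    sInf_le ⟨fun i => slabIncl (Tk k) ⁻¹' U i,
      fun i => (hUo i).preimage (isEmbedding_slabIncl _).continuous,
      by rw [← preimage_iUnion, hUcov, preimage_univ],
      fun i => (hUcat i).imp' _ fun _ hH => hH.slabRestrict, rfl⟩
  calc ∑' k, lamCat M (Tk k) (Λ.comap Subtype.val)
      ≤ ∑' k, ∑' i, tauLam (Λ.comap Subtype.val) (slabIncl (Tk k) ⁻¹' U i) :=
        ENNReal.tsum_le_tsum hslab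
    _ = ∑' i, ∑' k, tauLam (Λ.comap Subtype.val) (slabIncl (Tk k) ⁻¹' U i) := ENNReal.tsum_comm
    _ ≤ ∑' i, tauLam Λ (U i) := ENNReal.tsum_le_tsum fun i =>
        tsum_tauLam_preimage_slabIncl_le Λ (fun k => (hTk k).measurableSet) hd hcov (U i)

end Slab

theorem stmt10_general {M T : Type*} [TopologicalSpace M]
    [TopologicalSpace T] [MeasurableSpace T] [BorelSpace T] (Λ : Measure T)
    (Tk : ℕ → Set T) (hTk : ∀ k, IsOpen (Tk k)) (hTkcov : (⋃ k, Tk k) = Set.univ) :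
    lamCat M T Λ ≤ ∑' k, lamCat M ↥(Tk k) (Λ.comap (Subtype.val : ↥(Tk k) → T)) ∧
    (Pairwise (Function.onFun Disjoint Tk) →
      lamCat M T Λ = ∑' k, lamCat M ↥(Tk k) (Λ.comap (Subtype.val : ↥(Tk k) → T))) :=
  ⟨lamCat_le_tsum_lamCat_slab Λ hTk hTkcov, fun hd =>
    (lamCat_le_tsum_lamCat_slab Λ hTk hTkcov).antisymm
      (tsum_lamCat_slab_le_lamCat Λ hTk hTkcov hd)⟩

/-- for a countable family of open sets `T_k` covering `T`, the measured
category of the product lamination satisfies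
`Cat(M×T, Λ) ≤ Σ_k Cat(M×T_k, Λ|_{T_k})` (where `Λ|_{T_k}` is the restriction of `Λ`
along the inclusion `T_k ↪ T`), with equality when the `T_k` are pairwise disjoint. -/
theorem stmt10 {M T : Type*} [TopologicalSpace M] [T2Space M] [ConnectedSpace M]
    (n : ℕ) [ChartedSpace (EuclideanSpace ℝ (Fin n)) M]
    [TopologicalSpace T] [PolishSpace T] [LocallyCompactSpace T]
    [MeasurableSpace T] [BorelSpace T] (Λ : Measure T)
    (Tk : ℕ → Set T) (hTk : ∀ k, IsOpen (Tk k)) (hTkcov : (⋃ k, Tk k) = Set.univ) :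
    lamCat M T Λ ≤ ∑' k, lamCat M ↥(Tk k) (Λ.comap (Subtype.val : ↥(Tk k) → T)) ∧
    (Pairwise (Function.onFun Disjoint Tk) →
      lamCat M T Λ = ∑' k, lamCat M ↥(Tk k) (Λ.comap (Subtype.val : ↥(Tk k) → T))) :=
  stmt10_general Λ Tk hTk hTkcov
end
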